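/- Let f : ℂ → ℂ be entire (complex differentiable on all of ℂ), k ≥ 1, and let (z′_n) and (z″_n) be sequences with the same initial value z′_0 = z″_0 satisfying z′_{n+1} = z′_n + k·(1/f)^{(k−1)}(z′_n)/(1/f)^{(k)}(z′_n) and z″_{n+1} = z″_n − f(z″_n)·A_{k−1}(z″_n)/A_k(z″_n), where for every n one has f(z″_n) ≠ 0 and A_k(z″_n) ≠ 0. Then z′_n = z″_n for all n; consequently, for any ζ ∈ ℂ, the sequence (z′_n) converges to ζ if and only if (z″_n) converges to ζ, i.e. the basins of attraction of Householder's method and of the proposed method coincide. -/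

import Mathlib

/-- The functions `A j` from the proposed root-finding method, for an entire
function `f : ℂ → ℂ`:
`A 0 = 1`, `A 1 = f'`, `A 2 = (f')² - (1/2) f'' f`, and
`A (j+1) = f' * A j - f * Âⱼ` where
`Âⱼ = ∑_{l=2}^{j+1} (1/l!) (-f)^{l-2} f⁽ˡ⁾ A_{j+1-l}`
(here the inner sum is reindexed by `l = m + 2`). -/
noncomputable def A (f : ℂ → ℂ) : ℕ → ℂ → ℂ
  | 0, _ => 1
  | (j+1), z =>
      deriv f z * A f j z -
        f z * ∑ m ∈ Finset.range j,
          (((m+2).factorial : ℂ))⁻¹ * (-f z) ^ m * iteratedDeriv (m+2) f z *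
            A f (j - 1 - m) z
  termination_by j _ => j
  decreasing_by all_goals omega

open Finset in
lemma an_iter {f : ℂ → ℂ} {s : Set ℂ} (h : AnalyticOnNhd ℂ f s) (n : ℕ) :
    AnalyticOnNhd ℂ (iteratedDeriv n f) s := by
  rw [iteratedDeriv_eq_iterate]; exact h.iterated_deriv n

open Finset in
private lemma leibniz {f : ℂ → ℂ} (hf : Differentiable ℂ f) (n : ℕ) :
    ∀ z, f z ≠ 0 →
      ∑ l ∈ range (n + 1), (n.choose l : ℂ) * iteratedDeriv l f z *
        iteratedDeriv (n - l) (fun w => (f w)⁻¹) z = if n = 0 then 1 else 0 := by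
  set g : ℂ → ℂ := fun w => (f w)⁻¹ with hg
  have hU : IsOpen {w | f w ≠ 0} := isOpen_compl_singleton.preimage hf.continuous
  have hga : AnalyticOnNhd ℂ g {w | f w ≠ 0} := fun z hz => (hf.analyticAt z).inv hz
  have hgi : ∀ m, AnalyticOnNhd ℂ (iteratedDeriv m g) {w | f w ≠ 0} :=
    fun m => an_iter hga m
  have hfi : ∀ m z, HasDerivAt (iteratedDeriv m f) (iteratedDeriv (m + 1) f z) z := by
    intro m z
    rw [iteratedDeriv_succ]
    exact (an_iter (fun w _ => hf.analyticAt w) m z (Set.mem_univ z)).differentiableAt.hasDerivAt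
  have hgd : ∀ m z, f z ≠ 0 → HasDerivAt (iteratedDeriv m g) (iteratedDeriv (m + 1) g z) z := by
    intro m z hz
    rw [iteratedDeriv_succ]
    exact (hgi m z hz).differentiableAt.hasDerivAt
  induction n with
  | zero =>
    intro z hz
    simp [g, mul_inv_cancel₀ hz]
  | succ n IH =>
    intro z hz
    -- derivative of the sum function is zero
    have hmem : {w | f w ≠ 0} ∈ nhds z := hU.mem_nhds hz
    have hev : (fun w => ∑ l ∈ range (n + 1),
        (n.choose l : ℂ) * iteratedDeriv l f w * iteratedDeriv (n - l) g w)
        =ᶠ[nhds z] (fun _ => if n = 0 then (1:ℂ) else 0) :=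
      Filter.eventually_of_mem hmem (fun w hw => IH w hw)
    have hD : HasDerivAt (fun w => ∑ l ∈ range (n + 1),
        (n.choose l : ℂ) * iteratedDeriv l f w * iteratedDeriv (n - l) g w)
        (∑ l ∈ range (n + 1),
          ((n.choose l : ℂ) * iteratedDeriv (l + 1) f z * iteratedDeriv (n - l) g z +
           (n.choose l : ℂ) * iteratedDeriv l f z * iteratedDeriv (n - l + 1) g z)) z := by
      apply HasDerivAt.fun_sum
      intro l _
      have h1 := ((hfi l z).const_mul ((n.choose l : ℂ))).fun_mul (hgd (n - l) z hz)
      convert h1 using 1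
    have hzero : HasDerivAt (fun w => ∑ l ∈ range (n + 1),
        (n.choose l : ℂ) * iteratedDeriv l f w * iteratedDeriv (n - l) g w) 0 z :=
      (hasDerivAt_const z _).congr_of_eventuallyEq hev
    have hkey := hD.unique hzero
    -- rearrange
    rw [if_neg (Nat.succ_ne_zero n)]
    rw [← hkey]
    rw [Finset.sum_add_distrib]
    rw [Finset.sum_range_succ' (fun l => ((n+1).choose l : ℂ) * iteratedDeriv l f z *
        iteratedDeriv (n + 1 - l) g z)]
    have e1 : ∀ l ∈ range (n + 1),
        (((n+1).choose (l+1) : ℂ)) * iteratedDeriv (l+1) f z * iteratedDeriv (n + 1 - (l+1)) g z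
        = (n.choose l : ℂ) * iteratedDeriv (l + 1) f z * iteratedDeriv (n - l) g z
          + (n.choose (l+1) : ℂ) * iteratedDeriv (l+1) f z * iteratedDeriv (n - l) g z := by
      intro l _
      rw [Nat.choose_succ_succ, Nat.cast_add, Nat.succ_sub_succ]
      ring
    rw [Finset.sum_congr rfl e1, Finset.sum_add_distrib]
    have e2 : ∑ l ∈ range (n + 1),
        (n.choose l : ℂ) * iteratedDeriv l f z * iteratedDeriv (n - l + 1) g z
        = ∑ l ∈ range (n + 1),
          (n.choose (l+1) : ℂ) * iteratedDeriv (l+1) f z * iteratedDeriv (n - l) g z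
          + ((n+1).choose 0 : ℂ) * iteratedDeriv 0 f z * iteratedDeriv (n + 1 - 0) g z := by
      have e3 : ∀ l ∈ range (n + 1),
          (n.choose l : ℂ) * iteratedDeriv l f z * iteratedDeriv (n - l + 1) g z
          = (n.choose l : ℂ) * iteratedDeriv l f z * iteratedDeriv (n + 1 - l) g z := by
        intro l hl
        rw [mem_range] at hl
        congr 2
        omega
      rw [Finset.sum_congr rfl e3]
      rw [Finset.sum_range_succ' (fun l => (n.choose l : ℂ) * iteratedDeriv l f z *
          iteratedDeriv (n + 1 - l) g z), Finset.sum_range_succ]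
      simp [Nat.succ_sub_succ, Nat.choose_succ_self]
    rw [e2]
    ring

open Finset in
lemma key (f : ℂ → ℂ) (i : ℕ) (z : ℂ) :
    ∑ m ∈ range (i + 1), (((i+1).choose (m+1) : ℕ) : ℂ) * iteratedDeriv (m+1) f z *
        ((-1) ^ (i - m) * ((i - m).factorial : ℂ) * A f (i - m) z) * (f z) ^ m
      = (-1) ^ i * (((i+1).factorial : ℕ) : ℂ) * A f (i+1) z := by
  rw [show A f (i+1) z = deriv f z * A f i z -
        f z * ∑ m ∈ Finset.range i,
          (((m+2).factorial : ℂ))⁻¹ * (-f z) ^ m * iteratedDeriv (m+2) f z *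
            A f (i - 1 - m) z from by rw [A]]
  rw [Finset.sum_range_succ']
  have h0 : (((i+1).choose 1 : ℕ) : ℂ) * iteratedDeriv 1 f z *
      ((-1) ^ (i - 0) * ((i - 0).factorial : ℂ) * A f (i - 0) z) * (f z) ^ 0
      = (-1) ^ i * (((i+1).factorial : ℕ) : ℂ) * (deriv f z * A f i z) := by
    rw [Nat.choose_one_right, iteratedDeriv_one, Nat.sub_zero, Nat.factorial_succ,
      Nat.cast_mul, Nat.cast_add, Nat.cast_one]
    push_cast
    ring
  rw [h0]
  have h1 : ∑ m ∈ range i, (((i+1).choose (m+1+1) : ℕ) : ℂ) * iteratedDeriv (m+1+1) f z *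
        ((-1) ^ (i - (m+1)) * ((i - (m+1)).factorial : ℂ) * A f (i - (m+1)) z) * (f z) ^ (m+1)
      = ∑ m ∈ range i, (-((-1) ^ i * (((i+1).factorial : ℕ) : ℂ)) * f z) *
          ((((m+2).factorial : ℂ))⁻¹ * (-f z) ^ m * iteratedDeriv (m+2) f z *
            A f (i - 1 - m) z) := by
    apply Finset.sum_congr rfl
    intro m hm
    rw [mem_range] at hm
    have hidx : i - (m+1) = i - 1 - m := by omega
    rw [hidx]
    have hfact : (((i+1).choose (m+2) : ℕ) : ℂ) * ((m+2).factorial : ℂ) *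
        ((i - 1 - m).factorial : ℂ) = ((i+1).factorial : ℂ) := by
      rw [← Nat.cast_mul, ← Nat.cast_mul]
      norm_cast
      have := Nat.choose_mul_factorial_mul_factorial (show m + 2 ≤ i + 1 by omega)
      rw [show i + 1 - (m+2) = i - 1 - m by omega] at this
      exact this
    have hsign : ((-1 : ℂ)) ^ (i - (m+1)) = (-1) ^ i * (-1) ^ (m+1) := by
      have : ((-1 : ℂ)) ^ (i + (m+1)) = (-1) ^ (i - (m+1)) * ((-1) ^ (m+1)) ^ 2 := by
        rw [← pow_mul, ← pow_add]
        congr 1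
        omega
      rw [pow_add] at this
      have h2 : ((-1 : ℂ) ^ (m+1)) ^ 2 = 1 := by
        rw [← pow_mul, pow_mul']
        simp
      rw [h2, mul_one] at this
      exact this.symm
    rw [show i - (m+1) = i - 1 - m from by omega] at hsign
    have hne : ((m+2).factorial : ℂ) ≠ 0 := Nat.cast_ne_zero.mpr (Nat.factorial_ne_zero _)
    rw [show m+1+1 = m+2 from rfl]
    field_simp
    rw [hsign, ← hfact]
    rw [neg_pow (f z)]
    ring
  rw [h1, ← Finset.mul_sum]
  ring

open Finset in
lemma main_id {f : ℂ → ℂ} (hf : Differentiable ℂ f) :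
    ∀ j z, f z ≠ 0 → iteratedDeriv j (fun w => (f w)⁻¹) z
      = (-1) ^ j * (j.factorial : ℂ) * A f j z / f z ^ (j + 1) := by
  intro j
  induction j using Nat.strong_induction_on with
  | _ j IH =>
    match j with
    | 0 =>
      intro z hz
      simp [A, iteratedDeriv_zero, pow_one]
    | (i+1) =>
      intro z hz
      have hL := leibniz hf (i+1) z hz
      rw [if_neg (Nat.succ_ne_zero i)] at hL
      rw [Finset.sum_range_succ' (fun l => (((i+1).choose l : ℕ) : ℂ) * iteratedDeriv l f z *
          iteratedDeriv (i + 1 - l) (fun w => (f w)⁻¹) z)] at hL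
      simp only [Nat.choose_zero_right, Nat.cast_one, one_mul, iteratedDeriv_zero,
        Nat.sub_zero, Nat.succ_sub_succ] at hL
      -- hL : ∑ m ∈ range (i+1), C(i+1,m+1) f^{(m+1)} z * g^{(i-m)} z + f z * g^{(i+1)} z = 0
      have hsum : ∑ m ∈ range (i+1), (((i+1).choose (m+1) : ℕ) : ℂ) * iteratedDeriv (m+1) f z *
          iteratedDeriv (i - m) (fun w => (f w)⁻¹) z
          = (-1) ^ i * (((i+1).factorial : ℕ) : ℂ) * A f (i+1) z / f z ^ (i+1) := by
        rw [← key f i z, Finset.sum_div]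
        apply Finset.sum_congr rfl
        intro m hm
        rw [mem_range] at hm
        rw [IH (i - m) (by omega) z hz]
        rw [show (f z) ^ (i + 1) = f z ^ (i - m + 1) * f z ^ m from by
          rw [← pow_add]; congr 1; omega]
        field_simp [hz]
      rw [hsum] at hL
      have hp : (f z : ℂ) ^ (i + 1) ≠ 0 := pow_ne_zero _ hz
      have h2 : f z * iteratedDeriv (i+1) (fun w => (f w)⁻¹) z
          = -((-1 : ℂ) ^ i * (((i+1).factorial : ℕ) : ℂ) * A f (i+1) z / f z ^ (i+1)) := by
        linear_combination hL
      have h3 : f z * iteratedDeriv (i+1) (fun w => (f w)⁻¹) z * f z ^ (i+1)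
          = -((-1 : ℂ) ^ i * (((i+1).factorial : ℕ) : ℂ) * A f (i+1) z) := by
        rw [h2, neg_mul, div_mul_cancel₀ _ hp]
      rw [eq_div_iff (pow_ne_zero _ hz)]
      linear_combination h3

lemma step_eq {f : ℂ → ℂ} (hf : Differentiable ℂ f) (K : ℕ) (z : ℂ)
    (hz : f z ≠ 0) (hA : A f (K + 1) z ≠ 0) :
    ((K + 1 : ℕ) : ℂ) * iteratedDeriv K (fun w => (f w)⁻¹) z /
      iteratedDeriv (K + 1) (fun w => (f w)⁻¹) z
    = -(f z * A f K z / A f (K + 1) z) := by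
  rw [main_id hf K z hz, main_id hf (K + 1) z hz]
  have h1 : ((K+1).factorial : ℂ) ≠ 0 := Nat.cast_ne_zero.mpr (Nat.factorial_ne_zero _)
  have h2 : ((K).factorial : ℂ) ≠ 0 := Nat.cast_ne_zero.mpr (Nat.factorial_ne_zero _)
  have h3 : ((-1 : ℂ)) ^ K ≠ 0 := pow_ne_zero _ (by norm_num)
  have h4 : ((K : ℂ) + 1) ≠ 0 := by
    exact_mod_cast Nat.succ_ne_zero K
  rw [show (((K + 1).factorial : ℕ) : ℂ) = ((K : ℂ) + 1) * ((K.factorial : ℕ) : ℂ) from by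
    rw [Nat.factorial_succ]; push_cast; ring]
  field_simp
  push_cast
  ring

/-- For an entire function `f`, Householder's sequence and the proposed
sequence coincide; in particular, their basins of attraction coincide. -/
theorem householder_seq_eq_proposed_seq_complex
    (f : ℂ → ℂ) (hf : Differentiable ℂ f) (k : ℕ) (hk : 1 ≤ k)
    (z' z'' : ℕ → ℂ) (h0 : z' 0 = z'' 0)
    (hz' : ∀ n, z' (n + 1) =
      z' n + (k : ℂ) * iteratedDeriv (k - 1) (fun w => 1 / f w) (z' n) /
        iteratedDeriv k (fun w => 1 / f w) (z' n))
    (hz'' : ∀ n, z'' (n + 1) =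
      z'' n - f (z'' n) * A f (k - 1) (z'' n) / A f k (z'' n))
    (hne : ∀ n, f (z'' n) ≠ 0 ∧ A f k (z'' n) ≠ 0) :
    (∀ n, z' n = z'' n) ∧
      ∀ ζ : ℂ, Filter.Tendsto z' Filter.atTop (nhds ζ) ↔
        Filter.Tendsto z'' Filter.atTop (nhds ζ) := by
  simp only [one_div] at hz'
  obtain ⟨K, rfl⟩ : ∃ K, k = K + 1 := ⟨k - 1, by omega⟩
  have heq : ∀ n, z' n = z'' n := by
    intro n
    induction n with
    | zero => exact h0
    | succ n ih =>
      rw [hz' n, hz'' n, ih]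
      rw [show (K + 1 - 1 : ℕ) = K from rfl]
      rw [step_eq hf K (z'' n) (hne n).1 (hne n).2, sub_eq_add_neg]
  refine ⟨heq, fun ζ => ?_⟩
  rw [funext heq]
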